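/- For all integers m ≥ 1, r ≥ 0, and n ≥ 1: S_{2m}^{(r+1)}(n) = (1/2) · S_{2m}^{(r)}(n) + (1/(2m+1)) · Σ_{k=1}^{m+1} C(2m+1, 2k−1) · B_{2m+2−2k} · S_{2k-1}^{(r)}(n), where B_j denotes the Bernoulli numbers. -/

import Mathlib

/-! For `r = 0` this is Faulhaber's formula for `∑ i ^ (2m)`, taken in the form with
`bernoulli'` (`B'₁ = +1/2`): the index `1` contributes `n ^ (2m) / 2`, the other odd indices
vanish, and the even index `2m + 2 - 2k` gives the `k`-th summand. The identity is linear in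
`S · r`, so summing it over `i ∈ [1, n]` lifts it from level `r` to level `r + 1`. -/

open Finset

/-- Hyper-sum of powers of integers: `S m 0 n = n^m` and
`S m (r+1) n = ∑ i in [1..n], S m r i`. -/
def S (m : ℕ) : ℕ → ℕ → ℚ
  | 0, n => (n : ℚ) ^ m
  | r + 1, n => ∑ i ∈ Finset.Icc 1 n, S m r i

lemma S_succ (m r n : ℕ) : S m (r + 1) n = ∑ i ∈ Icc 1 n, S m r i := rfl

lemma sum_Icc_pow (n p : ℕ) :
    ∑ k ∈ Icc 1 n, (k : ℚ) ^ p =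
      ∑ i ∈ range (p + 1), bernoulli' i * (p + 1).choose i * (n : ℚ) ^ (p + 1 - i) / (p + 1) := by
  rw [← sum_Ico_pow, Ico_add_one_right_eq_Icc]

lemma sum_range_filter_odd_bernoulli'_mul {p : ℕ} (hp : 1 ≤ p) (f : ℕ → ℚ) :
    ∑ i ∈ range (p + 1) with ¬Even i, bernoulli' i * f i = f 1 / 2 := by
  rw [sum_eq_single_of_mem 1 (by simp only [mem_filter, mem_range, Nat.even_iff]; omega),
    bernoulli'_one, one_div_mul_eq_div]
  intro i hi hi1
  simp only [mem_filter, Nat.not_even_iff_odd] at hi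
  rw [bernoulli'_eq_zero_of_odd hi.2 (by obtain ⟨k, rfl⟩ := hi.2; omega), zero_mul]

lemma sum_range_filter_even_eq_sum_Icc (m : ℕ) (g : ℕ → ℚ) :
    ∑ i ∈ range (2 * m + 1) with Even i, g i = ∑ k ∈ Icc 1 (m + 1), g (2 * m + 2 - 2 * k) := by
  refine sum_nbij' (fun i => m + 1 - i / 2) (fun k => 2 * m + 2 - 2 * k) ?_ ?_ ?_ ?_ ?_ <;>
    intro i hi <;> simp only [mem_filter, mem_range, mem_Icc, Nat.even_iff] at hi ⊢
  case refine_5 => congr 1; omega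
  all_goals omega

lemma sum_Icc_pow_two_mul (m n : ℕ) (hm : 1 ≤ m) :
    ∑ i ∈ Icc 1 n, (i : ℚ) ^ (2 * m)
      = (1 / 2) * (n : ℚ) ^ (2 * m)
        + (1 / (2 * (m : ℚ) + 1)) * ∑ k ∈ Icc 1 (m + 1),
            ((2 * m + 1).choose (2 * k - 1) : ℚ) * bernoulli (2 * m + 2 - 2 * k)
              * (n : ℚ) ^ (2 * k - 1) := by
  set f : ℕ → ℚ := fun i => (2 * m + 1).choose i * (n : ℚ) ^ (2 * m + 1 - i)
  have hsplit : ∑ i ∈ range (2 * m + 1), bernoulli' i * f i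
      = f 1 / 2 + ∑ k ∈ Icc 1 (m + 1), bernoulli' (2 * m + 2 - 2 * k) * f (2 * m + 2 - 2 * k) := by
    rw [← sum_filter_not_add_sum_filter _ Even, sum_range_filter_odd_bernoulli'_mul (by omega),
      sum_range_filter_even_eq_sum_Icc]
  have hterm : ∀ k ∈ Icc 1 (m + 1), bernoulli' (2 * m + 2 - 2 * k) * f (2 * m + 2 - 2 * k)
      = ((2 * m + 1).choose (2 * k - 1) : ℚ) * bernoulli (2 * m + 2 - 2 * k)
          * (n : ℚ) ^ (2 * k - 1) := by
    intro k hk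
    rw [mem_Icc] at hk
    have hchoose : (2 * m + 1).choose (2 * m + 2 - 2 * k) = (2 * m + 1).choose (2 * k - 1) := by
      rw [show 2 * m + 2 - 2 * k = 2 * m + 1 - (2 * k - 1) by omega, Nat.choose_symm (by omega)]
    rw [bernoulli_eq_bernoulli'_of_ne_one (by omega)]
    simp only [f, hchoose, show 2 * m + 1 - (2 * m + 2 - 2 * k) = 2 * k - 1 by omega]
    ring
  have hf1 : f 1 = (2 * m + 1) * (n : ℚ) ^ (2 * m) := by simp [f]
  have hfaulhaber : ∑ i ∈ Icc 1 n, (i : ℚ) ^ (2 * m)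
      = (∑ i ∈ range (2 * m + 1), bernoulli' i * f i) / (2 * m + 1) := by
    rw [sum_Icc_pow, ← sum_div]
    push_cast
    simp only [f, mul_assoc]
  rw [hfaulhaber, hsplit, sum_congr rfl hterm, hf1]
  field_simp

theorem stmt_16_general (m r n : ℕ) (hm : 1 ≤ m) :
    S (2 * m) (r + 1) n
      = (1 / 2) * S (2 * m) r n
        + (1 / (2 * (m : ℚ) + 1)) * ∑ k ∈ Finset.Icc 1 (m + 1),
            ((2 * m + 1).choose (2 * k - 1) : ℚ) * bernoulli (2 * m + 2 - 2 * k)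
              * S (2 * k - 1) r n := by
  induction r generalizing n with
  | zero => exact sum_Icc_pow_two_mul m n hm
  | succ r ih =>
    rw [S_succ, sum_congr rfl fun i _ => ih i, sum_add_distrib, ← mul_sum, ← mul_sum, sum_comm]
    simp only [← mul_sum, ← S_succ]

theorem stmt_16 (m r n : ℕ) (hm : 1 ≤ m) (hn : 1 ≤ n) :
    S (2 * m) (r + 1) n
      = (1 / 2) * S (2 * m) r n
        + (1 / (2 * (m : ℚ) + 1)) * ∑ k ∈ Finset.Icc 1 (m + 1),
            ((2 * m + 1).choose (2 * k - 1) : ℚ) * bernoulli (2 * m + 2 - 2 * k)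
              * S (2 * k - 1) r n :=
  stmt_16_general m r n hm
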